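/- (Polar-coordinate bounds in the dissipative zone, non-negative dissipation.) Assume (A1): σ₀ admits an absolutely convergent Fourier expansion with A₁ < ∞; (A3) for η; and σ₀(η) ≥ 0 for all η. Let λ > 0 and v₀, v₁ ∈ ℝ. Let (ρ₁, θ₁) and (ρ₂, θ₂) be C¹ solutions on [0,∞) of the system ρ′ = −b(t) ρ sin²θ, θ′ = −λ − b(t) sin θ cos θ, with positive ρⱼ, and initial data ρ₁(0) = λ|v₀|, θ₁(0) = 0 if v₀ ≥ 0 and θ₁(0) = π if v₀ < 0; ρ₂(0) = |v₁|, θ₂(0) = π/2 if v₁ ≥ 0 and θ₂(0) = −π/2 if v₁ < 0. Then for all t ≥ 0: ρ₁(t)² ≤ λ²|v₀|², and ρ₂(t)² ≤ e^{2B₀} ((1+t)^{−2m} + λ² γ(t;m)²) |v₁|², where γ(t;m) := ∫₀ᵗ (1+s)^{−m} ds. -/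

import Mathlib

/-!
Since `b ≥ 0`, `(ρ²)' = -2bρ² sin²θ ≤ 0`, so the radius never increases; this is the first bound.
For the second, rotate `θ₂` by `π` if `v₁ < 0` (the system is invariant under `θ ↦ θ + π`); then
`x = ρ₂ cos θ₂`, `y = ρ₂ sin θ₂` solve `x' = λy`, `y' = -λx - by` with `x(0) = 0`, `y(0) = |v₁|`.
While `y ≥ 0`, `x` is nondecreasing, hence nonnegative, so `y e^{∫b}` is nonincreasing. Writing
`∫₀ˢ b = ∫₀ˢ σ(η)/(1+u) + m log(1+s) ≥ -B₀ + m log(1+s)` gives `y ≤ |v₁| e^{B₀} (1+s)^{-m}`, and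
integrating `x' = λy` gives `x ≤ λ|v₁| e^{B₀} γ`. After the first zero `t₁` of `y` the radius only
decreases, and `ρ₂(t₁) = x(t₁)` is already bounded.
-/

open Real Set intervalIntegral

lemma antitoneOn_of_hasDerivAt_nonpos {f f' : ℝ → ℝ} {D : Set ℝ} (hD : Convex ℝ D)
    (hf : ∀ t ∈ D, HasDerivAt f (f' t) t) (hf' : ∀ t ∈ interior D, f' t ≤ 0) :
    AntitoneOn f D :=
  antitoneOn_of_hasDerivWithinAt_nonpos hD (fun t ht => (hf t ht).continuousAt.continuousWithinAt)
    (fun t ht => (hf t (interior_subset ht)).hasDerivWithinAt) hf'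

lemma monotoneOn_of_hasDerivAt_nonneg {f f' : ℝ → ℝ} {D : Set ℝ} (hD : Convex ℝ D)
    (hf : ∀ t ∈ D, HasDerivAt f (f' t) t) (hf' : ∀ t ∈ interior D, 0 ≤ f' t) :
    MonotoneOn f D :=
  monotoneOn_of_hasDerivWithinAt_nonneg hD (fun t ht => (hf t ht).continuousAt.continuousWithinAt)
    (fun t ht => (hf t (interior_subset ht)).hasDerivWithinAt) hf'

lemma ContinuousOn.nonneg_or_exists_first_zero {f : ℝ → ℝ} {a b : ℝ}
    (hf : ContinuousOn f (Icc a b)) (ha : 0 ≤ f a) :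
    (∀ s ∈ Icc a b, 0 ≤ f s) ∨ ∃ c ∈ Icc a b, f c = 0 ∧ ∀ s ∈ Icc a c, 0 ≤ f s := by
  by_cases hnonneg : ∀ s ∈ Icc a b, 0 ≤ f s
  · exact Or.inl hnonneg
  push Not at hnonneg
  obtain ⟨s₀, hs₀, hfs₀⟩ := hnonneg
  have zero_before : ∀ s ∈ Icc a b, f s < 0 → ∃ r ∈ Icc a s, f r = 0 := fun s hs hfs =>
    intermediate_value_Icc' hs.1 (hf.mono (Icc_subset_Icc_right hs.2)) ⟨hfs.le, ha⟩
  set Z := Icc a b ∩ f ⁻¹' {0}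
  have hZ : IsCompact Z := isCompact_Icc.of_isClosed_subset
    (hf.preimage_isClosed_of_isClosed isClosed_Icc isClosed_singleton) inter_subset_left
  obtain ⟨r, hr, hfr⟩ := zero_before s₀ hs₀ hfs₀
  obtain ⟨c, ⟨hc, hfc⟩, hleast⟩ := hZ.exists_isLeast ⟨r, ⟨hr.1, hr.2.trans hs₀.2⟩, hfr⟩
  refine Or.inr ⟨c, hc, hfc, fun s hs => not_lt.1 fun hfs => ?_⟩
  have hsab : s ∈ Icc a b := ⟨hs.1, hs.2.trans hc.2⟩
  obtain ⟨r, hr, hfr⟩ := zero_before s hsab hfs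
  have hcr : c ≤ r := hleast ⟨⟨hr.1, hr.2.trans hsab.2⟩, hfr⟩
  have hrs : r = s := le_antisymm hr.2 (hs.2.trans hcr)
  exact hfs.ne (hrs ▸ hfr)

lemma hasDerivAt_integral_comp_max {f : ℝ → ℝ} (hf : ContinuousOn f (Ici 0)) {s : ℝ}
    (hs : 0 ≤ s) : HasDerivAt (fun u => ∫ v in (0 : ℝ)..u, f (max v 0)) (f s) s := by
  have hcont : Continuous fun v => f (max v 0) :=
    hf.comp_continuous (continuous_id.max continuous_const) fun v => le_max_right v 0
  simpa only [max_eq_left hs] using (hcont.integral_hasStrictDerivAt 0 s).hasDerivAt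

lemma monotoneOn_integral_of_nonneg {f : ℝ → ℝ} (hf : ContinuousOn f (Ici 0))
    (hf₀ : ∀ s, 0 ≤ s → 0 ≤ f s) : MonotoneOn (fun s => ∫ u in (0 : ℝ)..s, f u) (Ici 0) :=
  fun _ ha _ _ hac => integral_mono_interval le_rfl ha hac
    (MeasureTheory.ae_restrict_of_forall_mem measurableSet_Ioc fun u hu => hf₀ u hu.1.le)
    (hf.mono (uIcc_of_le (ha.trans hac) ▸ Icc_subset_Ici_self)).intervalIntegrable

lemma integral_comp_max_eq {f : ℝ → ℝ} {s : ℝ} (hs : 0 ≤ s) :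
    ∫ v in (0 : ℝ)..s, f (max v 0) = ∫ v in (0 : ℝ)..s, f v :=
  integral_congr fun v hv => by rw [max_eq_left (uIcc_of_le hs ▸ hv).1]

lemma integral_div_one_add_eq {f : ℝ → ℝ} (hf : ContinuousOn f (Ici 0)) (m : ℝ) {s : ℝ}
    (hs : 0 ≤ s) :
    ∫ u in (0 : ℝ)..s, f u / (1 + u) =
      (∫ u in (0 : ℝ)..s, (f u - m) / (1 + u)) + m * log (1 + s) := by
  have hpos : ∀ u ∈ uIcc 0 s, 0 < 1 + u := fun u hu => by linarith [(uIcc_of_le hs ▸ hu).1]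
  have hcont : ∀ g : ℝ → ℝ, ContinuousOn g (Ici 0) →
      IntervalIntegrable (fun u => g u / (1 + u)) MeasureTheory.volume 0 s := fun g hg =>
    ((hg.mono fun u hu => (uIcc_of_le hs ▸ hu).1).div (continuousOn_const.add continuousOn_id)
      fun u hu => (hpos u hu).ne').intervalIntegrable
  have hlog : ∫ u in (0 : ℝ)..s, m / (1 + u) = m * log (1 + s) := by
    have hshift := integral_comp_add_left (fun u : ℝ => u⁻¹) (1 : ℝ) (a := 0) (b := s)
    simp only [add_zero] at hshift
    simp only [div_eq_mul_inv, integral_const_mul, hshift,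
      integral_inv_of_pos one_pos (by linarith : (0 : ℝ) < 1 + s), inv_one, mul_one]
  rw [← hlog, ← integral_add (hcont (fun u => f u - m) (hf.sub continuousOn_const))
    (hcont (fun _ => m) continuousOn_const)]
  simp only [← add_div, sub_add_cancel]

lemma exp_neg_integral_div_one_add_le {f : ℝ → ℝ} (hf : ContinuousOn f (Ici 0)) {m B s : ℝ}
    (hs : 0 ≤ s) (hB : |∫ u in (0 : ℝ)..s, (f u - m) / (1 + u)| ≤ B) :
    exp (-∫ u in (0 : ℝ)..s, f u / (1 + u)) ≤ exp B * (1 + s) ^ (-m) := by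
  rw [integral_div_one_add_eq hf m hs, rpow_def_of_pos (by linarith), ← exp_add]
  gcongr
  linarith [neg_abs_le (∫ u in (0 : ℝ)..s, (f u - m) / (1 + u))]

namespace DampedOscillator

variable {lam : ℝ} {b x y : ℝ → ℝ}
  (hx : ∀ t, 0 ≤ t → HasDerivAt x (lam * y t) t)
  (hy : ∀ t, 0 ≤ t → HasDerivAt y (-lam * x t - b t * y t) t)
include hx

lemma x_nonneg (hlam : 0 ≤ lam) (hx0 : x 0 = 0) {s : ℝ} (hyn : ∀ u ∈ Icc 0 s, 0 ≤ y u) :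
    ∀ u ∈ Icc 0 s, 0 ≤ x u := fun u hu => by
  have hmono : MonotoneOn x (Icc 0 s) :=
    monotoneOn_of_hasDerivAt_nonneg (convex_Icc 0 s) (fun t ht => hx t ht.1) fun t ht =>
      mul_nonneg hlam (hyn t (interior_subset ht))
  simpa only [hx0] using hmono ⟨le_rfl, hu.1.trans hu.2⟩ hu hu.1

lemma x_le (hlam : 0 ≤ lam) (hx0 : x 0 = 0) {g : ℝ → ℝ} {s : ℝ} (hs : 0 ≤ s)
    (hg : MeasureTheory.IntegrableOn g (Icc 0 s)) (hyg : ∀ u ∈ Icc 0 s, y u ≤ g u) :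
    x s ≤ lam * ∫ u in (0 : ℝ)..s, g u := by
  rw [← integral_const_mul]
  simpa only [hx0, sub_zero] using sub_le_integral_of_hasDeriv_right_of_le hs
    (fun t ht => (hx t ht.1).continuousAt.continuousWithinAt)
    (fun t ht => (hx t ht.1.le).hasDerivWithinAt) (hg.const_mul lam)
    fun t ht => mul_le_mul_of_nonneg_left (hyg t (Ioo_subset_Icc_self ht)) hlam

include hy

lemma y_le_mul_exp (hlam : 0 ≤ lam) (hx0 : x 0 = 0) {D : ℝ → ℝ}
    (hD : ∀ t, 0 ≤ t → HasDerivAt D (b t) t) {s : ℝ} (hs : 0 ≤ s)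
    (hyn : ∀ u ∈ Icc 0 s, 0 ≤ y u) : y s ≤ y 0 * exp (D 0 - D s) := by
  have hanti : AntitoneOn (fun u => y u * exp (D u)) (Icc 0 s) :=
    antitoneOn_of_hasDerivAt_nonpos (convex_Icc 0 s) (fun t ht => (hy t ht.1).mul (hD t ht.1).exp)
      fun t ht => by
        have hxt := x_nonneg hx hlam hx0 hyn t (interior_subset ht)
        nlinarith [exp_pos (D t), mul_nonneg (mul_nonneg hlam hxt) (exp_pos (D t)).le]
  have hdecay := hanti ⟨le_rfl, hs⟩ ⟨hs, le_rfl⟩ hs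
  calc y s = y s * exp (D s) * exp (-D s) := by
        rw [mul_assoc, ← exp_add, add_neg_cancel, exp_zero, mul_one]
    _ ≤ y 0 * exp (D 0) * exp (-D s) := by gcongr
    _ = y 0 * exp (D 0 - D s) := by rw [mul_assoc, ← exp_add, sub_eq_add_neg]

section Envelope

variable (hlam : 0 ≤ lam) (hx0 : x 0 = 0) {D w : ℝ → ℝ} (hD : ∀ t, 0 ≤ t → HasDerivAt D (b t) t)
  (hw : ∀ t, 0 ≤ t → exp (D 0 - D t) ≤ w t)
include hlam hx0 hD hw

lemma y_le_envelope {s : ℝ} (hyn : ∀ u ∈ Icc 0 s, 0 ≤ y u) : ∀ u ∈ Icc 0 s, y u ≤ y 0 * w u :=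
  fun u hu =>
  calc y u ≤ y 0 * exp (D 0 - D u) :=
        y_le_mul_exp hx hy hlam hx0 hD hu.1 fun v hv => hyn v ⟨hv.1, hv.2.trans hu.2⟩
    _ ≤ y 0 * w u := mul_le_mul_of_nonneg_left (hw u hu.1) (hyn 0 ⟨le_rfl, hu.1.trans hu.2⟩)

lemma x_le_envelope (hwc : ContinuousOn w (Ici 0)) {s : ℝ} (hs : 0 ≤ s)
    (hyn : ∀ u ∈ Icc 0 s, 0 ≤ y u) : x s ≤ lam * (y 0 * ∫ u in (0 : ℝ)..s, w u) := by
  rw [← integral_const_mul]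
  exact x_le hx hlam hx0 hs ((hwc.mono Icc_subset_Ici_self).integrableOn_Icc.const_mul (y 0))
    (y_le_envelope hx hy hlam hx0 hD hw hyn)

end Envelope

lemma antitoneOn_sq_add_sq (hb : ∀ t, 0 ≤ t → 0 ≤ b t) :
    AntitoneOn (fun t => x t ^ 2 + y t ^ 2) (Ici 0) :=
  antitoneOn_of_hasDerivAt_nonpos (convex_Ici 0)
    (fun t ht => ((hx t ht).pow 2).add ((hy t ht).pow 2)) fun t ht => by
      have hbt := hb t (interior_subset ht)
      norm_num
      nlinarith [mul_nonneg hbt (sq_nonneg (y t))]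

end DampedOscillator

lemma sq_eq_mul_cos_sq_add_mul_sin_sq (r θ : ℝ) : r ^ 2 = (r * cos θ) ^ 2 + (r * sin θ) ^ 2 := by
  linear_combination (-r ^ 2) * cos_sq_add_sin_sq θ

def IsDampedPolarSolution (b : ℝ → ℝ) (lam : ℝ) (ρ θ : ℝ → ℝ) : Prop :=
  ∀ t, 0 ≤ t → HasDerivAt ρ (-b t * ρ t * sin (θ t) ^ 2) t ∧
    HasDerivAt θ (-lam - b t * sin (θ t) * cos (θ t)) t

namespace IsDampedPolarSolution

variable {b : ℝ → ℝ} {lam : ℝ} {ρ θ : ℝ → ℝ}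

lemma of_hasDerivAt {ρ' θ' : ℝ → ℝ} (hρ : ∀ t, 0 ≤ t → HasDerivAt ρ (ρ' t) t)
    (hθ : ∀ t, 0 ≤ t → HasDerivAt θ (θ' t) t)
    (hρ' : ∀ t, 0 ≤ t → ρ' t = -b t * ρ t * sin (θ t) ^ 2)
    (hθ' : ∀ t, 0 ≤ t → θ' t = -lam - b t * sin (θ t) * cos (θ t)) :
    IsDampedPolarSolution b lam ρ θ :=
  fun t ht => ⟨hρ' t ht ▸ hρ t ht, hθ' t ht ▸ hθ t ht⟩

variable (hsol : IsDampedPolarSolution b lam ρ θ)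
include hsol

lemma add_pi : IsDampedPolarSolution b lam ρ (fun t => θ t + π) := fun t ht => by
  obtain ⟨hρ, hθ⟩ := hsol t ht
  refine ⟨by simpa only [sin_add_pi, neg_sq] using hρ, (hθ.add_const π).congr_deriv ?_⟩
  rw [sin_add_pi, cos_add_pi]
  ring

lemma hasDerivAt_mul_cos {t : ℝ} (ht : 0 ≤ t) :
    HasDerivAt (fun s => ρ s * cos (θ s)) (lam * (ρ t * sin (θ t))) t := by
  obtain ⟨hρ, hθ⟩ := hsol t ht
  exact (hρ.mul hθ.cos).congr_deriv (by ring)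

lemma hasDerivAt_mul_sin {t : ℝ} (ht : 0 ≤ t) :
    HasDerivAt (fun s => ρ s * sin (θ s))
      (-lam * (ρ t * cos (θ t)) - b t * (ρ t * sin (θ t))) t := by
  obtain ⟨hρ, hθ⟩ := hsol t ht
  exact (hρ.mul hθ.sin).congr_deriv
    (by linear_combination (-b t * ρ t * sin (θ t)) * sin_sq_add_cos_sq (θ t))

lemma antitoneOn_sq (hb : ∀ t, 0 ≤ t → 0 ≤ b t) : AntitoneOn (fun t => ρ t ^ 2) (Ici 0) := by
  simpa only [← sq_eq_mul_cos_sq_add_mul_sin_sq] using DampedOscillator.antitoneOn_sq_add_sq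
    (fun t ht => hsol.hasDerivAt_mul_cos ht) (fun t ht => hsol.hasDerivAt_mul_sin ht) hb

lemma sq_le_of_envelope (hlam : 0 ≤ lam) (hb : ∀ t, 0 ≤ t → 0 ≤ b t) (hρ0 : 0 ≤ ρ 0)
    (hθ0 : θ 0 = π / 2) {D w : ℝ → ℝ} (hD : ∀ t, 0 ≤ t → HasDerivAt D (b t) t)
    (hw : ∀ t, 0 ≤ t → exp (D 0 - D t) ≤ w t) (hwc : ContinuousOn w (Ici 0)) {t : ℝ}
    (ht : 0 ≤ t) : ρ t ^ 2 ≤ ρ 0 ^ 2 * (w t ^ 2 + lam ^ 2 * (∫ s in (0 : ℝ)..t, w s) ^ 2) := by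
  set x := fun s => ρ s * cos (θ s)
  set y := fun s => ρ s * sin (θ s)
  have hx : ∀ s, 0 ≤ s → HasDerivAt x (lam * y s) s := fun s hs => hsol.hasDerivAt_mul_cos hs
  have hy : ∀ s, 0 ≤ s → HasDerivAt y (-lam * x s - b s * y s) s :=
    fun s hs => hsol.hasDerivAt_mul_sin hs
  have hx0 : x 0 = 0 := by simp [x, hθ0]
  have hy0 : y 0 = ρ 0 := by simp [y, hθ0]
  have hyle := fun s => DampedOscillator.y_le_envelope (s := s) hx hy hlam hx0 hD hw
  have hxle := fun s => DampedOscillator.x_le_envelope (s := s) hx hy hlam hx0 hD hw hwc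
  have hxnn := fun s => DampedOscillator.x_nonneg (s := s) hx hlam hx0
  have hsq : ∀ s, ρ s ^ 2 = x s ^ 2 + y s ^ 2 := fun s => sq_eq_mul_cos_sq_add_mul_sin_sq _ _
  set I := fun s => ∫ u in (0 : ℝ)..s, w u
  have hI : MonotoneOn I (Ici 0) :=
    monotoneOn_integral_of_nonneg hwc fun s hs => (exp_pos _).le.trans (hw s hs)
  have hycont : ContinuousOn y (Icc 0 t) := fun s hs => (hy s hs.1).continuousAt.continuousWithinAt
  rcases hycont.nonneg_or_exists_first_zero (hy0 ▸ hρ0) with hyn | ⟨c, hc, hyc, hyn⟩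
  · have hxt := hxnn t hyn t ⟨ht, le_rfl⟩
    have hyt := hyn t ⟨ht, le_rfl⟩
    calc ρ t ^ 2 = x t ^ 2 + y t ^ 2 := hsq t
      _ ≤ (lam * (ρ 0 * I t)) ^ 2 + (ρ 0 * w t) ^ 2 := by
        gcongr
        exacts [hy0 ▸ hxle t ht hyn, hy0 ▸ hyle t hyn t ⟨ht, le_rfl⟩]
      _ = ρ 0 ^ 2 * (w t ^ 2 + lam ^ 2 * I t ^ 2) := by ring
  · have hxc := hxnn c hyn c ⟨hc.1, le_rfl⟩
    calc ρ t ^ 2 ≤ ρ c ^ 2 := hsol.antitoneOn_sq hb hc.1 ht hc.2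
      _ = x c ^ 2 := by rw [hsq, hyc]; ring
      _ ≤ (lam * (ρ 0 * I c)) ^ 2 := by
        gcongr
        exact hy0 ▸ hxle c hc.1 hyn
      _ ≤ (lam * (ρ 0 * I t)) ^ 2 := by
        have := hI hc.1 ht hc.2
        gcongr
        exact hxc.trans (hy0 ▸ hxle c hc.1 hyn)
      _ ≤ ρ 0 ^ 2 * (w t ^ 2 + lam ^ 2 * I t ^ 2) := by nlinarith [sq_nonneg (ρ 0 * w t)]

end IsDampedPolarSolution

theorem polar_bounds_dissipative_zone_general
    (m : ℝ)
    (σ₀ : ℝ → ℝ)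
    (hσ₀cont : Continuous σ₀)
    (hσ₀nonneg : ∀ x : ℝ, 0 ≤ σ₀ x)
    (η η' : ℝ → ℝ)
    (hηd : ∀ t, 0 ≤ t → HasDerivAt η (η' t) t)
    (B₀ : ℝ)
    (hB₀ : ∀ τm τp : ℝ, 0 ≤ τm → τm ≤ τp →
      |∫ s in τm..τp, (σ₀ (η s) - m) / (1 + s)| ≤ B₀)
    (lam v₀ v₁ : ℝ) (hlam : 0 < lam)
    (ρ₁ ρ₁' θ₁ θ₁' ρ₂ ρ₂' θ₂ θ₂' : ℝ → ℝ)
    (hρ₁d : ∀ t, 0 ≤ t → HasDerivAt ρ₁ (ρ₁' t) t)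
    (hθ₁d : ∀ t, 0 ≤ t → HasDerivAt θ₁ (θ₁' t) t)
    (hρ₂d : ∀ t, 0 ≤ t → HasDerivAt ρ₂ (ρ₂' t) t)
    (hθ₂d : ∀ t, 0 ≤ t → HasDerivAt θ₂ (θ₂' t) t)
    (hρ₁eq : ∀ t, 0 ≤ t →
      ρ₁' t = -(σ₀ (η t) / (1 + t)) * ρ₁ t * Real.sin (θ₁ t) ^ 2)
    (hθ₁eq : ∀ t, 0 ≤ t →
      θ₁' t = -lam - σ₀ (η t) / (1 + t) * Real.sin (θ₁ t) * Real.cos (θ₁ t))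
    (hρ₂eq : ∀ t, 0 ≤ t →
      ρ₂' t = -(σ₀ (η t) / (1 + t)) * ρ₂ t * Real.sin (θ₂ t) ^ 2)
    (hθ₂eq : ∀ t, 0 ≤ t →
      θ₂' t = -lam - σ₀ (η t) / (1 + t) * Real.sin (θ₂ t) * Real.cos (θ₂ t))
    (hρ₁0 : ρ₁ 0 = lam * |v₀|)
    (hρ₂0 : ρ₂ 0 = |v₁|)
    (hθ₂0 : θ₂ 0 = if 0 ≤ v₁ then Real.pi / 2 else -(Real.pi / 2)) :
    ∀ t, 0 ≤ t →
      ρ₁ t ^ 2 ≤ lam ^ 2 * v₀ ^ 2 ∧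
      ρ₂ t ^ 2 ≤ Real.exp (2 * B₀) *
        ((1 + t) ^ (-(2 * m)) + lam ^ 2 * (∫ s in (0:ℝ)..t, (1 + s) ^ (-m)) ^ 2) * v₁ ^ 2 := by
  intro t ht
  set b : ℝ → ℝ := fun s => σ₀ (η s) / (1 + s)
  have hb : ∀ s, 0 ≤ s → 0 ≤ b s := fun s hs => div_nonneg (hσ₀nonneg _) (by linarith)
  have hση : ContinuousOn (fun s => σ₀ (η s)) (Ici 0) := hσ₀cont.comp_continuousOn
    fun s hs => (hηd s hs).continuousAt.continuousWithinAt
  have hbc : ContinuousOn b (Ici 0) := hση.div (continuousOn_const.add continuousOn_id)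
    fun s (hs : 0 ≤ s) => by positivity
  have h₁ : IsDampedPolarSolution b lam ρ₁ θ₁ := .of_hasDerivAt hρ₁d hθ₁d hρ₁eq hθ₁eq
  have h₂ : IsDampedPolarSolution b lam ρ₂ θ₂ := .of_hasDerivAt hρ₂d hθ₂d hρ₂eq hθ₂eq
  refine ⟨?_, ?_⟩
  · calc ρ₁ t ^ 2 ≤ ρ₁ 0 ^ 2 := h₁.antitoneOn_sq hb self_mem_Ici ht ht
      _ = lam ^ 2 * v₀ ^ 2 := by rw [hρ₁0, mul_pow, sq_abs]
  obtain ⟨θ, hθ, hθ0⟩ : ∃ θ, IsDampedPolarSolution b lam ρ₂ θ ∧ θ 0 = π / 2 := by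
    split_ifs at hθ₂0
    exacts [⟨θ₂, h₂, hθ₂0⟩, ⟨_, h₂.add_pi, by rw [hθ₂0]; ring⟩]
  -- `b` is only continuous on `[0, ∞)`; freezing it at `b 0` to the left gives a primitive with a
  -- two-sided derivative at `0`.
  set D := fun u => ∫ v in (0 : ℝ)..u, b (max v 0)
  have hD : ∀ s, 0 ≤ s → exp (D 0 - D s) ≤ exp B₀ * (1 + s) ^ (-m) := fun s hs => by
    simpa only [D, integral_same, zero_sub, integral_comp_max_eq hs]
      using exp_neg_integral_div_one_add_le hση hs (hB₀ 0 s le_rfl hs)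
  have hwc : ContinuousOn (fun s => exp B₀ * (1 + s) ^ (-m)) (Ici 0) :=
    continuousOn_const.mul <| (continuous_const.add continuous_id).continuousOn.rpow_const
      fun s (hs : 0 ≤ s) => Or.inl (show 1 + s ≠ 0 by positivity)
  have hexp : exp (2 * B₀) = exp B₀ ^ 2 := by rw [sq, ← exp_add, two_mul]
  have hrpow : (1 + t) ^ (-(2 * m)) = ((1 + t) ^ (-m)) ^ 2 := by
    rw [← rpow_mul_natCast (by positivity)]
    ring_nf
  convert hθ.sq_le_of_envelope hlam.le hb (hρ₂0 ▸ abs_nonneg v₁) hθ0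
    (fun s hs => hasDerivAt_integral_comp_max hbc hs) hD hwc ht using 1
  rw [hρ₂0, sq_abs, integral_const_mul, hexp, hrpow]
  ring

/-- Polar-coordinate bounds in the dissipative zone, non-negative dissipation. -/
theorem polar_bounds_dissipative_zone
    (T m A₁ : ℝ) (hT : 0 < T)
    (α β : ℕ → ℝ) (σ₀ : ℝ → ℝ)
    (hσ₀cont : Continuous σ₀)
    (hσ₀per : Function.Periodic σ₀ (2 * T))
    (hσ₀nonneg : ∀ x : ℝ, 0 ≤ σ₀ x)
    (hsum : Summable fun n : ℕ => |α (n + 1)| + |β (n + 1)|)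
    (hA₁ : A₁ = ∑' n : ℕ, (|α (n + 1)| + |β (n + 1)|))
    (hmean : m = 1 / (2 * T) * ∫ s in (-T)..T, σ₀ s)
    (hFourier : ∀ x : ℝ, σ₀ x = m + ∑' n : ℕ,
      (α (n + 1) * Real.cos (((n : ℝ) + 1) * Real.pi * x / T)
        + β (n + 1) * Real.sin (((n : ℝ) + 1) * Real.pi * x / T)))
    (η η' η'' : ℝ → ℝ)
    (hη0 : 0 ≤ η 0)
    (hηd : ∀ t, 0 ≤ t → HasDerivAt η (η' t) t)
    (hηd' : ∀ t, 0 ≤ t → HasDerivAt η' (η'' t) t)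
    (hη'pos : ∀ t, 0 ≤ t → 0 < η' t)
    (hη''pos : ∀ t, 0 ≤ t → 0 < η'' t)
    (B₀ : ℝ)
    (hB₀ : ∀ τm τp : ℝ, 0 ≤ τm → τm ≤ τp →
      |∫ s in τm..τp, (σ₀ (η s) - m) / (1 + s)| ≤ B₀)
    (lam v₀ v₁ : ℝ) (hlam : 0 < lam)
    (ρ₁ ρ₁' θ₁ θ₁' ρ₂ ρ₂' θ₂ θ₂' : ℝ → ℝ)
    (hρ₁pos : ∀ t, 0 ≤ t → 0 < ρ₁ t) (hρ₂pos : ∀ t, 0 ≤ t → 0 < ρ₂ t)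
    (hρ₁d : ∀ t, 0 ≤ t → HasDerivAt ρ₁ (ρ₁' t) t)
    (hθ₁d : ∀ t, 0 ≤ t → HasDerivAt θ₁ (θ₁' t) t)
    (hρ₂d : ∀ t, 0 ≤ t → HasDerivAt ρ₂ (ρ₂' t) t)
    (hθ₂d : ∀ t, 0 ≤ t → HasDerivAt θ₂ (θ₂' t) t)
    (hρ₁eq : ∀ t, 0 ≤ t →
      ρ₁' t = -(σ₀ (η t) / (1 + t)) * ρ₁ t * Real.sin (θ₁ t) ^ 2)
    (hθ₁eq : ∀ t, 0 ≤ t →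
      θ₁' t = -lam - σ₀ (η t) / (1 + t) * Real.sin (θ₁ t) * Real.cos (θ₁ t))
    (hρ₂eq : ∀ t, 0 ≤ t →
      ρ₂' t = -(σ₀ (η t) / (1 + t)) * ρ₂ t * Real.sin (θ₂ t) ^ 2)
    (hθ₂eq : ∀ t, 0 ≤ t →
      θ₂' t = -lam - σ₀ (η t) / (1 + t) * Real.sin (θ₂ t) * Real.cos (θ₂ t))
    (hρ₁0 : ρ₁ 0 = lam * |v₀|)
    (hθ₁0 : θ₁ 0 = if 0 ≤ v₀ then 0 else Real.pi)
    (hρ₂0 : ρ₂ 0 = |v₁|)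
    (hθ₂0 : θ₂ 0 = if 0 ≤ v₁ then Real.pi / 2 else -(Real.pi / 2)) :
    ∀ t, 0 ≤ t →
      ρ₁ t ^ 2 ≤ lam ^ 2 * v₀ ^ 2 ∧
      ρ₂ t ^ 2 ≤ Real.exp (2 * B₀) *
        ((1 + t) ^ (-(2 * m)) + lam ^ 2 * (∫ s in (0:ℝ)..t, (1 + s) ^ (-m)) ^ 2) * v₁ ^ 2 :=
  polar_bounds_dissipative_zone_general m σ₀ hσ₀cont hσ₀nonneg η η' hηd B₀ hB₀ lam v₀ v₁ hlam ρ₁ ρ₁'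
    θ₁ θ₁' ρ₂ ρ₂' θ₂ θ₂' hρ₁d hθ₁d hρ₂d hθ₂d hρ₁eq hθ₁eq hρ₂eq hθ₂eq hρ₁0 hρ₂0 hθ₂0
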